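/- arXiv:2404.04529 — 2 statements merged into one kernel-verified Lean document; each statement's English description precedes it below -/
import Mathlib

section
/- Let M be a countable structure satisfying Hypothesis (H). Then PS(M), the collection of pointwise stabilizers of finite Galois-algebraically closed sets, equals the set of those H ∈ GS(M) for which there is no H' ∈ GS(M) with H' ⊊ H, H' ⊴ H and [H : H'] < ω. -/
/-! Every `G_(K,L)` maps the finite set `K` onto itself, so `G_(K)`, the intersection of the
stabilizers of the points of `K`, is a normal subgroup of finite index of `G_(K,L)` lying in `GS(M)`;
minimality therefore forces `G_(K,L) = G_(K)`. Conversely, if `G_(K₁,L₁)` has finite index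
in `G_(K)`, every point of `K₁`, having a finite orbit under `G_(K₁,L₁)`, has a finite orbit
under `G_(K)`, so `K₁ ⊆ acl(K) = K` and `G_(K) ≤ G_(K₁,L₁)`. -/

open FirstOrder

namespace Paper

variable (L : FirstOrder.Language) (M : Type*) [L.Structure M]

/-- The group of automorphisms of a first-order structure, with composition. -/
instance autGroup : Group (M ≃[L] M) where
  one := FirstOrder.Language.Equiv.refl L M
  mul f g := f.comp g
  inv := FirstOrder.Language.Equiv.symm
  mul_assoc _ _ _ := rfl
  one_mul f := FirstOrder.Language.Equiv.ext fun a => by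
    show (FirstOrder.Language.Equiv.refl L M).comp f a = f a; simp
  mul_one f := FirstOrder.Language.Equiv.ext fun a => by
    show f.comp (FirstOrder.Language.Equiv.refl L M) a = f a; simp
  inv_mul_cancel f := FirstOrder.Language.Equiv.ext fun a => by
    show f.symm.comp f a = FirstOrder.Language.Equiv.refl L M a; simp

@[simp] theorem aut_one_apply (a : M) : (1 : M ≃[L] M) a = a := by
  show FirstOrder.Language.Equiv.refl L M a = a; simp
@[simp] theorem aut_mul_apply (f g : M ≃[L] M) (a : M) : (f * g) a = f (g a) := rfl
@[simp] theorem aut_inv_apply (f : M ≃[L] M) (a : M) : f⁻¹ a = f.symm a := rfl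
@[simp] theorem aut_coe_mul (f g : M ≃[L] M) : ⇑(f * g) = ⇑f ∘ ⇑g := rfl

/-- The natural action of the automorphism group on the structure. -/
instance autAction : MulAction (M ≃[L] M) M where
  smul f a := f a
  one_smul _ := rfl
  mul_smul _ _ _ := rfl

@[simp] theorem aut_smul_def (f : M ≃[L] M) (a : M) : f • a = f a := rfl

/-- The topology of pointwise convergence on the automorphism group (the domain
being regarded as discrete). -/
instance autTopology : TopologicalSpace (M ≃[L] M) :=
  letI : TopologicalSpace M := ⊥
  TopologicalSpace.induced (fun g => (g : M → M)) Pi.topologicalSpace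

/-- The pointwise stabilizer `G_(A)` of a set `A ⊆ M` in `Aut(M)`. -/
def pstab (A : Set M) : Subgroup (M ≃[L] M) where
  carrier := {g | ∀ a ∈ A, g a = a}
  one_mem' := fun _ _ => rfl
  mul_mem' := by
    intro f g hf hg a ha
    simp only [Set.mem_setOf_eq] at *
    rw [aut_mul_apply, hg a ha, hf a ha]
  inv_mem' := by
    intro f hf a ha
    simp only [Set.mem_setOf_eq] at *
    rw [aut_inv_apply]
    conv_lhs => rw [← hf a ha]
    exact f.symm_apply_apply a

/-- The setwise stabilizer `G_{A}` of a set `A ⊆ M` in `Aut(M)`. -/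
def sstab (A : Set M) : Subgroup (M ≃[L] M) where
  carrier := {g | g '' A = A}
  one_mem' := by
    simp only [Set.mem_setOf_eq]
    ext a; simp [Set.mem_image]
  mul_mem' := by
    intro f g hf hg
    simp only [Set.mem_setOf_eq] at *
    rw [aut_coe_mul, Set.image_comp, hg, hf]
  inv_mem' := by
    intro f hf
    simp only [Set.mem_setOf_eq] at *
    conv_lhs => rw [← hf]
    rw [Set.image_image]
    ext a; constructor
    · rintro ⟨x, hx, rfl⟩
      simpa [f.symm_apply_apply] using hx
    · intro ha
      exact ⟨a, ha, f.symm_apply_apply a⟩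

/-- The Galois-algebraic closure of `A ⊆ M`: the set of elements with finite orbit
under the pointwise stabilizer of `A`. -/
def aclg (A : Set M) : Set M :=
  {b | (MulAction.orbit (pstab L M A) b).Finite}

/-- The Galois-definable closure of the empty set: elements fixed by every automorphism. -/
def dclg0 : Set M := {b | ∀ g : M ≃[L] M, g b = b}

/-- `p : K ≃ K'` is an isomorphism between the induced substructures on `K` and `K'`. -/
def IsPartialIso (K K' : Set M) (p : K ≃ K') : Prop :=
  (∀ {n : ℕ} (f : L.Functions n) (x : Fin n → K),
      ∃ h : FirstOrder.Language.Structure.funMap f (fun i => (x i : M)) ∈ K,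
        (p ⟨FirstOrder.Language.Structure.funMap f (fun i => (x i : M)), h⟩ : M) =
          FirstOrder.Language.Structure.funMap f (fun i => (p (x i) : M))) ∧
  (∀ {n : ℕ} (r : L.Relations n) (x : Fin n → K),
      FirstOrder.Language.Structure.RelMap r (fun i => (x i : M)) ↔
        FirstOrder.Language.Structure.RelMap r (fun i => (p (x i) : M)))

/-- `A(M)`: the collection of Galois-algebraic closures of finite subsets of `M`. -/
def AA : Set (Set M) := {K | ∃ A : Set M, A.Finite ∧ K = aclg L M A}

/-- Hypothesis (H). -/
structure HypH : Prop where
  countable : Countable M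
  locallyFinite : ∀ A : Set M, A.Finite → (aclg L M A).Finite
  extendsIso : ∀ (K K' : Set M), K.Finite → K'.Finite →
    aclg L M K = K → aclg L M K' = K' → ∀ p : K ≃ K', IsPartialIso L M K K' p →
      ∃ g : M ≃[L] M, ∀ a : K, g a = (p a : M)
  openSandwich : ∀ H : Subgroup (M ≃[L] M), IsOpen (H : Set (M ≃[L] M)) →
    ∃! K : Set M, K.Finite ∧ aclg L M K = K ∧ pstab L M K ≤ H ∧ H ≤ sstab L M K


/-- Generalized pointwise stabilizer `G_(K,L)`. -/
def genStab (K : Set M) (Lsub : Subgroup (Equiv.Perm K)) : Subgroup (M ≃[L] M) where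
  carrier := {f | ∃ p ∈ Lsub, ∀ a : K, f a = (p a : M)}
  one_mem' := ⟨1, Lsub.one_mem, fun a => by simp⟩
  mul_mem' := by
    rintro f g ⟨p, hp, hfp⟩ ⟨q, hq, hgq⟩
    refine ⟨p * q, Lsub.mul_mem hp hq, fun a => ?_⟩
    rw [aut_mul_apply, hgq a, hfp (q a)]
    rfl
  inv_mem' := by
    rintro f ⟨p, hp, hfp⟩
    refine ⟨p⁻¹, Lsub.inv_mem hp, fun a => ?_⟩
    have h1 : f ((p⁻¹ a : K) : M) = ((p (p⁻¹ a) : K) : M) := hfp _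
    rw [show p (p⁻¹ a) = a from p.apply_symm_apply a] at h1
    rw [aut_inv_apply, ← h1, FirstOrder.Language.Equiv.symm_apply_apply]

/-- `GS(M)`: the collection of generalized pointwise stabilizers. -/
def GS : Set (Subgroup (M ≃[L] M)) :=
  {H | ∃ K ∈ AA L M, ∃ Lsub : Subgroup (Equiv.Perm K),
    (∀ p ∈ Lsub, IsPartialIso L M K K (p : K ≃ K)) ∧ H = genStab L M K Lsub}

/-- `PS(M)`: the collection of pointwise stabilizers of members of `A(M)`. -/
def PS : Set (Subgroup (M ≃[L] M)) := {H | ∃ K ∈ AA L M, H = pstab L M K}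

/-- The lattice `A₊(M)`. -/
def Aplus : Set (Set M) := AA L M ∪ {dclg0 L M}

/-- Covering relation in `S`. -/
def hasseCovers {α : Type*} (S : Set (Set α)) (A B : Set α) : Prop :=
  A ∈ S ∧ B ∈ S ∧ A ⊂ B ∧ ¬∃ C ∈ S, A ⊂ C ∧ C ⊂ B

/-- Adjacency in the Hasse diagram of `S`. -/
def hasseAdj {α : Type*} (S : Set (Set α)) (A B : Set α) : Prop :=
  hasseCovers S A B ∨ hasseCovers S B A

/-- `A_k(M)`: members of `A(M)` distinct from `dcl(∅)` at distance `≤ k` from the bottom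
of the lattice `A₊(M)` in its Hasse diagram. -/
def Ak (k : ℕ) : Set (Set M) :=
  {K | K ∈ AA L M ∧ K ≠ dclg0 L M ∧ ∃ (j : ℕ) (c : Fin (j + 1) → Set M), j ≤ k ∧
    c 0 = dclg0 L M ∧ c (Fin.last j) = K ∧
    ∀ i : Fin j, hasseAdj (Aplus L M) (c i.castSucc) (c i.succ)}

/-- `A_k(M)` for `k ≤ ω`, with `A_ω(M) = A(M)`. -/
def AkE (k : ℕ∞) : Set (Set M) :=
  match k with
  | ⊤ => AA L M
  | (k : ℕ) => Ak L M k

/-- `k_M`: the supremum of lengths of strict chains of Galois-algebraic closures of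
singletons. -/
noncomputable def kM : ℕ∞ :=
  ⨆ k ∈ {k : ℕ | ∃ a : Fin k → M, ∀ i j : Fin k, i < j → aclg L M {a i} ⊂ aclg L M {a j}},
    (k : ℕ∞)

/-- The domain of the expanded structure `E^ex_M(k)`: triples `(K, p, K')` with
`K, K' ∈ A_k(M)` and `p : K ≅ K'`. -/
structure ExTriple (k : ℕ∞) where
  K : Set M
  K' : Set M
  hK : K ∈ AkE L M k
  hK' : K' ∈ AkE L M k
  p : K ≃ K'
  iso : IsPartialIso L M K K' p

/-- The unary predicate of `E^ex_M(k)` holding of the identity triples. -/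
def IsIdTriple {k : ℕ∞} (t : ExTriple L M k) : Prop :=
  t.K = t.K' ∧ ∀ a : t.K, (t.p a : M) = (a : M)

/-- The `n`-ary relation `E_n` of `E^ex_M(k)`. -/
def ERel {k : ℕ∞} {n : ℕ} (x : Fin n → ExTriple L M k) : Prop :=
  ∃ g : M ≃[L] M, ∀ (i : Fin n) (a : (x i).K), g a = ((x i).p a : M)

/-- The binary relation `Dom` of `E^ex_M(k)`. -/
def DomRel {k : ℕ∞} (t s : ExTriple L M k) : Prop := IsIdTriple L M s ∧ s.K = t.K

/-- The binary relation `Cod` of `E^ex_M(k)`. -/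
def CodRel {k : ℕ∞} (t s : ExTriple L M k) : Prop := IsIdTriple L M s ∧ s.K = t.K'

variable {L M}

/-- A bijection between the domains of `E^ex_M(k)` and `E^ex_N(k)` is an isomorphism
if it preserves the identity-triple predicate, all the relations `E_n`, `Dom` and `Cod`. -/
def IsExIso {L' : FirstOrder.Language} {N : Type*} [L'.Structure N] {k : ℕ∞}
    (F : ExTriple L M k ≃ ExTriple L' N k) : Prop :=
  (∀ t, IsIdTriple L M t ↔ IsIdTriple L' N (F t)) ∧
  (∀ (n : ℕ) (x : Fin n → ExTriple L M k), ERel L M x ↔ ERel L' N (F ∘ x)) ∧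
  (∀ t s, DomRel L M t s ↔ DomRel L' N (F t) (F s)) ∧
  (∀ t s, CodRel L M t s ↔ CodRel L' N (F t) (F s))

variable (L M)

/-- The automorphism group of the expanded structure `E^ex_M(k)`. -/
def exAut (k : ℕ∞) : Subgroup (Equiv.Perm (ExTriple L M k)) where
  carrier := {σ | IsExIso (σ : ExTriple L M k ≃ ExTriple L M k)}
  one_mem' := by
    refine ⟨fun t => ?_, fun n x => ?_, fun t s => ?_, fun t s => ?_⟩ <;>
      simp [Equiv.Perm.coe_one, Function.comp_def]
  mul_mem' := by
    rintro σ τ ⟨hσ1, hσ2, hσ3, hσ4⟩ ⟨hτ1, hτ2, hτ3, hτ4⟩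
    refine ⟨fun t => ?_, fun n x => ?_, fun t s => ?_, fun t s => ?_⟩
    · exact (hτ1 t).trans (hσ1 (τ t))
    · exact (hτ2 n x).trans (hσ2 n (τ ∘ x))
    · exact (hτ3 t s).trans (hσ3 (τ t) (τ s))
    · exact (hτ4 t s).trans (hσ4 (τ t) (τ s))
  inv_mem' := by
    rintro σ ⟨hσ1, hσ2, hσ3, hσ4⟩
    refine ⟨fun t => ?_, fun n x => ?_, fun t s => ?_, fun t s => ?_⟩
    · have := hσ1 (σ⁻¹ t); simpa using this.symm
    · have := hσ2 n (⇑(σ⁻¹) ∘ x)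
      have hx : ⇑σ ∘ ⇑(σ⁻¹) ∘ x = x := by
        funext i; simp
      rw [hx] at this
      exact this.symm
    · have := hσ3 (σ⁻¹ t) (σ⁻¹ s); simpa using this.symm
    · have := hσ4 (σ⁻¹ t) (σ⁻¹ s); simpa using this.symm

/-- The subgroup of topological automorphisms of a topological group. -/
def topMulAut (G : Type*) [Group G] [TopologicalSpace G] : Subgroup (MulAut G) where
  carrier := {α | Continuous (α : G → G) ∧ Continuous (α.symm : G → G)}
  one_mem' := ⟨continuous_id, continuous_id⟩
  mul_mem' := by
    rintro α β ⟨hα1, hα2⟩ ⟨hβ1, hβ2⟩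
    exact ⟨hα1.comp hβ1, hβ2.comp hα2⟩
  inv_mem' := by
    rintro α ⟨h1, h2⟩
    exact ⟨h2, h1⟩

/-- A group isomorphism between topological groups which is a homeomorphism. -/
def IsTopIso {G H : Type*} [Group G] [Group H] [TopologicalSpace G] [TopologicalSpace H]
    (e : G ≃* H) : Prop :=
  Continuous (e : G → H) ∧ Continuous (e.symm : H → G)

/-- The natural homomorphism from `Aut(M)` to the symmetric group on `M`. -/
def toPerm : (M ≃[L] M) →* Equiv.Perm M where
  toFun g := g.toEquiv
  map_one' := rfl
  map_mul' f g := Equiv.ext fun _ => rfl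

/-- The orbit equivalence relation on `n`-tuples. -/
def orbRel (n : ℕ) (x y : Fin n → M) : Prop := ∃ g : M ≃[L] M, ∀ i, g (x i) = y i

/-- The automorphism group of the orbital structure `E_M`: permutations of `M`
preserving each orbit equivalence relation. -/
def autOrbital : Subgroup (Equiv.Perm M) where
  carrier := {f | ∀ (n : ℕ) (x y : Fin n → M),
    orbRel L M n x y ↔ orbRel L M n (f ∘ x) (f ∘ y)}
  one_mem' := by intro n x y; simp [Equiv.Perm.coe_one]
  mul_mem' := by
    intro f g hf hg n x y
    exact (hg n x y).trans (hf n (g ∘ x) (g ∘ y))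
  inv_mem' := by
    intro f hf n x y
    have := hf n (⇑(f⁻¹) ∘ x) (⇑(f⁻¹) ∘ y)
    have hx : ⇑f ∘ ⇑(f⁻¹) ∘ x = x := by funext i; simp
    have hy : ⇑f ∘ ⇑(f⁻¹) ∘ y = y := by funext i; simp
    rw [hx, hy] at this
    exact this.symm

/-- `Aut°(E_M)`: automorphisms of the orbital structure preserving each orbit
equivalence class. -/
def autOrbitalFix : Subgroup (Equiv.Perm M) where
  carrier := {f | f ∈ autOrbital L M ∧ ∀ (n : ℕ) (x : Fin n → M), orbRel L M n x (f ∘ x)}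
  one_mem' := ⟨(autOrbital L M).one_mem, fun n x => ⟨1, fun i => by simp [Equiv.Perm.coe_one]⟩⟩
  mul_mem' := by
    rintro f g ⟨hf, hf2⟩ ⟨hg, hg2⟩
    refine ⟨(autOrbital L M).mul_mem hf hg, fun n x => ?_⟩
    obtain ⟨a, ha⟩ := hg2 n x
    obtain ⟨b, hb⟩ := hf2 n (g ∘ x)
    exact ⟨b * a, fun i => by rw [aut_mul_apply, ha i, hb i]; rfl⟩
  inv_mem' := by
    rintro f ⟨hf, hf2⟩
    refine ⟨(autOrbital L M).inv_mem hf, fun n x => ?_⟩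
    obtain ⟨a, ha⟩ := hf2 n (⇑(f⁻¹) ∘ x)
    refine ⟨a⁻¹, fun i => ?_⟩
    have hi := ha i
    simp only [Function.comp_apply, Equiv.Perm.coe_inv, Equiv.apply_symm_apply] at hi
    rw [← hi, aut_inv_apply, FirstOrder.Language.Equiv.symm_apply_apply]
    rfl

/-- A homogeneous structure: isomorphisms between finite substructures extend to
automorphisms. -/
def Homogeneous : Prop :=
  ∀ (K K' : Set M), K.Finite → K'.Finite → ∀ p : K ≃ K',
    IsPartialIso L M K K' p → ∃ g : M ≃[L] M, ∀ a : K, g a = (p a : M)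

/-- Weak elimination of imaginaries, phrased group-theoretically: every open subgroup is
sandwiched between the pointwise and setwise stabilizers of a unique smallest finite
Galois-algebraically closed set. -/
def HasWEI : Prop :=
  ∀ H : Subgroup (M ≃[L] M), IsOpen (H : Set (M ≃[L] M)) →
    ∃ K : Set M, (K.Finite ∧ aclg L M K = K ∧ pstab L M K ≤ H ∧ H ≤ sstab L M K) ∧
      ∀ K' : Set M, (K'.Finite ∧ aclg L M K' = K' ∧ pstab L M K' ≤ H ∧ H ≤ sstab L M K') →
        K ⊆ K'

/-- No algebraicity: every finite set is Galois-algebraically closed. -/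
def NoAlgebraicity : Prop := ∀ A : Set M, A.Finite → aclg L M A = A

/-- The small index property: every subgroup of index `< 2^ℵ₀` is open. -/
def SIP : Prop :=
  ∀ H : Subgroup (M ≃[L] M), Cardinal.mk ((M ≃[L] M) ⧸ H) < Cardinal.continuum →
    IsOpen (H : Set (M ≃[L] M))

/-- An oligomorphic action: finitely many orbits on `n`-tuples for every `n`. -/
def Oligo (G : Type*) [Group G] (X : Type*) [MulAction G X] : Prop :=
  ∀ n : ℕ, Finite (MulAction.orbitRel.Quotient G (Fin n → X))

end Paper

namespace Paper

/-- ω-categoricity: `M` is, up to isomorphism, the unique countable model of its complete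
first-order theory. -/
def IsOmegaCategorical (L : FirstOrder.Language) (M : Type w) [L.Structure M] : Prop :=
  Countable M ∧ ∀ (N : Type w) (iN : L.Structure N), Countable N → Nonempty N →
    (@FirstOrder.Language.Theory.Model L N iN (L.completeTheory M)) →
      Nonempty (@FirstOrder.Language.Equiv L N M iN _)


section OrbitIndex

open MulAction

variable {G X : Type*} [Group G] [MulAction G X]

theorem relIndex_stabilizer_eq_ncard_orbit (S : Subgroup G) (x : X) :
    (stabilizer G x).relIndex S = (orbit S x).ncard :=
  index_stabilizer S x

theorem finite_orbit_iff_relIndex_stabilizer_ne_zero (S : Subgroup G) (x : X) :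
    (orbit S x).Finite ↔ (stabilizer G x).relIndex S ≠ 0 := by
  rw [relIndex_stabilizer_eq_ncard_orbit]
  exact ⟨fun h => Set.ncard_ne_zero_of_mem (mem_orbit_self x) h, Set.finite_of_ncard_ne_zero⟩

theorem finite_orbit_of_relIndex_ne_zero {H S : Subgroup G} (hHS : H.relIndex S ≠ 0) {x : X}
    (hx : (orbit H x).Finite) : (orbit S x).Finite := by
  rw [finite_orbit_iff_relIndex_stabilizer_ne_zero] at hx ⊢
  exact Subgroup.relIndex_ne_zero_trans hx hHS

theorem relIndex_fixingSubgroup_ne_zero {S : Subgroup G} {s : Set X} (hs : s.Finite)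
    (horbit : ∀ x ∈ s, (orbit S x).Finite) : (fixingSubgroup G s).relIndex S ≠ 0 := by
  have hinf : fixingSubgroup G s = ⨅ x : s, stabilizer G (x : X) := by
    ext g
    simp [mem_fixingSubgroup_iff, Subgroup.mem_iInf]
  have := hs.to_subtype
  rw [hinf]
  exact Subgroup.relIndex_iInf_ne_zero fun x =>
    (finite_orbit_iff_relIndex_stabilizer_ne_zero S _).1 (horbit x x.2)

theorem fixingSubgroup_subgroupOf_normal {S : Subgroup G} {s : Set X}
    (hS : ∀ g ∈ S, ∀ x ∈ s, g • x ∈ s) : ((fixingSubgroup G s).subgroupOf S).Normal := by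
  refine ⟨fun n hn g => ?_⟩
  rw [Subgroup.mem_subgroupOf, mem_fixingSubgroup_iff] at hn ⊢
  intro x hx
  have hx' : (g : G)⁻¹ • x ∈ s := hS _ (S.inv_mem g.2) x hx
  simp only [Subgroup.coe_mul, Subgroup.coe_inv, mul_smul, hn _ hx', smul_inv_smul]

end OrbitIndex

section Closure

variable {L : FirstOrder.Language} {M : Type*} [L.Structure M]

theorem pstab_eq_fixingSubgroup (A : Set M) : pstab L M A = fixingSubgroup (M ≃[L] M) A := by
  ext g
  rw [mem_fixingSubgroup_iff]
  rfl

theorem pstab_antitone {A B : Set M} (hAB : A ⊆ B) : pstab L M B ≤ pstab L M A :=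
  fun _ hg a ha => hg a (hAB ha)

theorem subset_aclg (A : Set M) : A ⊆ aclg L M A := by
  intro a ha
  apply (Set.finite_singleton a).subset
  rintro _ ⟨g, rfl⟩
  exact g.2 a ha

theorem funMap_mem_aclg {A : Set M} {n : ℕ} (f : L.Functions n) {x : Fin n → M}
    (hx : ∀ i, x i ∈ aclg L M A) : Language.Structure.funMap f x ∈ aclg L M A := by
  have hfin : (Set.pi Set.univ fun i => MulAction.orbit (pstab L M A) (x i)).Finite :=
    Set.Finite.pi hx
  apply (hfin.image (Language.Structure.funMap f)).subset
  rintro _ ⟨g, rfl⟩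
  refine ⟨fun i => (g : M ≃[L] M) (x i), fun i _ => ⟨g, rfl⟩, ?_⟩
  exact (Language.HomClass.map_fun (g : M ≃[L] M) f x).symm

theorem aclg_aclg {A : Set M} (hA : (aclg L M A).Finite) :
    aclg L M (aclg L M A) = aclg L M A := by
  refine (Set.Subset.antisymm ?_ (subset_aclg _))
  intro b hb
  have hindex : (pstab L M (aclg L M A)).relIndex (pstab L M A) ≠ 0 := by
    rw [pstab_eq_fixingSubgroup (aclg L M A)]
    exact relIndex_fixingSubgroup_ne_zero hA fun a ha => ha
  exact finite_orbit_of_relIndex_ne_zero hindex hb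

theorem HypH.finite_of_mem_AA (h : HypH L M) {K : Set M} (hK : K ∈ AA L M) : K.Finite := by
  obtain ⟨A, hA, rfl⟩ := hK
  exact h.locallyFinite A hA

end Closure

section GenStab

variable {L : FirstOrder.Language} {M : Type*} [L.Structure M]

theorem mem_of_mem_genStab {K : Set M} {Lsub : Subgroup (Equiv.Perm K)} {g : M ≃[L] M}
    (hg : g ∈ genStab L M K Lsub) {a : M} (ha : a ∈ K) : g a ∈ K := by
  obtain ⟨p, -, hgp⟩ := hg
  rw [hgp ⟨a, ha⟩]
  exact (p ⟨a, ha⟩).2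

theorem orbit_genStab_subset {K : Set M} (Lsub : Subgroup (Equiv.Perm K)) {a : M} (ha : a ∈ K) :
    MulAction.orbit (genStab L M K Lsub) a ⊆ K := by
  rintro _ ⟨g, rfl⟩
  exact mem_of_mem_genStab g.2 ha

theorem pstab_le_genStab (K : Set M) (Lsub : Subgroup (Equiv.Perm K)) :
    pstab L M K ≤ genStab L M K Lsub :=
  fun g hg => ⟨1, Lsub.one_mem, fun a => by simp [hg a a.2]⟩

theorem genStab_bot (K : Set M) : genStab L M K ⊥ = pstab L M K := by
  refine le_antisymm ?_ (pstab_le_genStab K ⊥)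
  rintro g ⟨p, hp, hgp⟩ a ha
  rw [Subgroup.mem_bot] at hp
  subst hp
  simpa using hgp ⟨a, ha⟩

theorem pstab_subgroupOf_genStab_normal (K : Set M) (Lsub : Subgroup (Equiv.Perm K)) :
    ((pstab L M K).subgroupOf (genStab L M K Lsub)).Normal := by
  rw [pstab_eq_fixingSubgroup]
  exact fixingSubgroup_subgroupOf_normal fun g hg a ha => mem_of_mem_genStab hg ha

theorem relIndex_pstab_genStab_ne_zero {K : Set M} (hK : K.Finite)
    (Lsub : Subgroup (Equiv.Perm K)) :
    (pstab L M K).relIndex (genStab L M K Lsub) ≠ 0 := by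
  rw [pstab_eq_fixingSubgroup]
  exact relIndex_fixingSubgroup_ne_zero hK fun a ha => hK.subset (orbit_genStab_subset Lsub ha)

theorem pstab_mem_GS {K : Set M} (hK : K ∈ AA L M) : pstab L M K ∈ GS L M := by
  refine ⟨K, hK, ⊥, ?_, (genStab_bot K).symm⟩
  obtain ⟨A, -, rfl⟩ := hK
  rintro _ hp
  rw [Subgroup.mem_bot] at hp
  subst hp
  exact ⟨fun f x => ⟨funMap_mem_aclg f fun i => (x i).2, rfl⟩, fun r x => Iff.rfl⟩

theorem subset_aclg_of_relIndex_genStab_ne_zero {K₁ K : Set M} (hK₁ : K₁.Finite)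
    {Lsub : Subgroup (Equiv.Perm K₁)} (hindex : (genStab L M K₁ Lsub).relIndex (pstab L M K) ≠ 0) :
    K₁ ⊆ aclg L M K :=
  fun _ ha => finite_orbit_of_relIndex_ne_zero hindex (hK₁.subset (orbit_genStab_subset Lsub ha))

end GenStab

/-- Under Hypothesis (H), the pointwise stabilizers of members of `A(M)`
are exactly the members of `GS(M)` with no proper normal subgroup of finite index
in `GS(M)`. -/
theorem stmt_11 (L : FirstOrder.Language) (M : Type*) [L.Structure M] (h : HypH L M) :
    PS L M = {H ∈ GS L M | ¬∃ H' ∈ GS L M,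
      H' < H ∧ (H'.subgroupOf H).Normal ∧ H'.relIndex H ≠ 0} := by
  ext H
  constructor
  · rintro ⟨K, hK, rfl⟩
    refine ⟨pstab_mem_GS hK, ?_⟩
    rintro ⟨_, ⟨K₁, hK₁, L₁, -, rfl⟩, hlt, -, hindex⟩
    have hsub : K₁ ⊆ K := by
      obtain ⟨A, hA, rfl⟩ := hK
      simpa only [aclg_aclg (h.locallyFinite A hA)] using
        subset_aclg_of_relIndex_genStab_ne_zero (h.finite_of_mem_AA hK₁) hindex
    exact hlt.not_ge ((pstab_antitone hsub).trans (pstab_le_genStab K₁ L₁))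
  · rintro ⟨⟨K, hK, Lsub, -, rfl⟩, hmin⟩
    refine ⟨K, hK, ?_⟩
    by_contra hne
    exact hmin ⟨pstab L M K, pstab_mem_GS hK,
      (pstab_le_genStab K Lsub).lt_of_ne (Ne.symm hne), pstab_subgroupOf_genStab_normal K Lsub,
      relIndex_pstab_genStab_ne_zero (h.finite_of_mem_AA hK) Lsub⟩

end Paper
end

section
/- Let M and N be countable structures satisfying Hypothesis (H). If Aut(M) and Aut(N) are topologically isomorphic, then for every 0 < k ≤ ω the expanded structures E^ex_M(k) and E^ex_N(k) are isomorphic. -/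
open FirstOrder

namespace Paper

/-!
Under (H), an open subgroup `H ≤ Aut(M)` determines a unique finite Galois-closed `K` with
`G_(K) ≤ H ≤ G_{K}`, and this set is invariant under the normaliser of `H`. Since `e` is a
homeomorphism, `e(G_(K))` is open for `K ∈ A(M)`, and the invariance argument shows it is itself
a pointwise stabilizer `G_(θ K)`, where `θ K = fixSet e K` is the fixed-point set of `e(G_(K))`.
Thus `θ` is an isomorphism of the lattices `A₊(M) ≅ A₊(N)` (so it preserves Hasse distances and
each `A_k`), it is equivariant, `θ (g K) = e(g) θ(K)`, and `u, v` agree on `K` iff `e u, e v`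
agree on `θ K`.
Sending `(K, p, K')` to `(θ K, e(ĝ)|θ K, θ K')`, for any automorphism `ĝ` extending `p`, is then
the required isomorphism `E^ex_M(k) ≅ E^ex_N(k)`.
-/

section

open FirstOrder.Language Pointwise

variable {L L' : FirstOrder.Language} {M N : Type*} [L.Structure M] [L'.Structure N]

section Stabilizers

lemma mem_pstab {A : Set M} {g : M ≃[L] M} : g ∈ pstab L M A ↔ ∀ a ∈ A, g • a = a := Iff.rfl

lemma mem_sstab {A : Set M} {g : M ≃[L] M} : g ∈ sstab L M A ↔ g • A = A := Iff.rfl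

lemma pstab_antitone_s15 : Antitone (pstab L M) := fun _ _ hAB _ hg a ha => hg a (hAB ha)

lemma pstab_le_sstab (A : Set M) : pstab L M A ≤ sstab L M A := by
  intro g hg
  ext b
  constructor
  · rintro ⟨a, ha, rfl⟩
    rwa [hg a ha]
  · exact fun hb => ⟨b, hb, hg b hb⟩

lemma pstab_dclg0 : pstab L M (dclg0 L M) = ⊤ :=
  eq_top_iff.2 fun g _ _ ha => ha g

lemma eqOn_iff_inv_mul_mem_pstab {A : Set M} {u v : M ≃[L] M} :
    Set.EqOn u v A ↔ v⁻¹ * u ∈ pstab L M A := by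
  simp only [mem_pstab, mul_smul, inv_smul_eq_iff]
  rfl

lemma mem_pstab_smul (g h : M ≃[L] M) (A : Set M) :
    h ∈ pstab L M (g • A) ↔ g⁻¹ * h * g ∈ pstab L M A := by
  simp only [mem_pstab, ← Set.image_smul, Set.forall_mem_image, mul_smul, inv_smul_eq_iff]

lemma mem_sstab_smul (g h : M ≃[L] M) (A : Set M) :
    h ∈ sstab L M (g • A) ↔ g⁻¹ * h * g ∈ sstab L M A := by
  rw [mem_sstab, mem_sstab, mul_smul, mul_smul, inv_smul_eq_iff]

lemma sstab_le_normalizer_pstab (A : Set M) :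
    sstab L M A ≤ Subgroup.normalizer (pstab L M A : Set (M ≃[L] M)) := fun g hg => by
  rw [Subgroup.mem_normalizer_iff'']
  intro h
  rw [← mem_pstab_smul, mem_sstab.1 hg]

lemma isOpen_pstab {A : Set M} (hA : A.Finite) : IsOpen (pstab L M A : Set (M ≃[L] M)) := by
  let _ : TopologicalSpace M := ⊥
  have : (pstab L M A : Set (M ≃[L] M)) = ⋂ a ∈ A, (fun g : M ≃[L] M => g a) ⁻¹' {a} := by
    ext g
    simp [mem_pstab]
  rw [this]
  exact hA.isOpen_biInter fun a _ =>
    ((continuous_apply a).comp continuous_induced_dom).isOpen_preimage _ trivial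

end Stabilizers

section GaloisClosure

lemma smul_mem_aclg (g : M ≃[L] M) {A : Set M} {b : M} (hb : b ∈ aclg L M A) :
    g • b ∈ aclg L M (g • A) := by
  refine (hb.smul_set (a := g)).subset ?_
  rintro _ ⟨h, rfl⟩
  refine ⟨(g⁻¹ * h * g) • b, ⟨⟨_, (mem_pstab_smul g h A).1 h.2⟩, rfl⟩, ?_⟩
  simp only [mul_smul, smul_inv_smul]
  rfl

lemma aclg_smul (g : M ≃[L] M) (A : Set M) : aclg L M (g • A) = g • aclg L M A := by
  ext b
  rw [Set.mem_smul_set_iff_inv_smul_mem]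
  constructor
  · intro hb
    simpa only [inv_smul_smul] using smul_mem_aclg g⁻¹ hb
  · intro hb
    simpa only [smul_inv_smul] using smul_mem_aclg g hb

lemma pstab_le_sstab_aclg (A : Set M) : pstab L M A ≤ sstab L M (aclg L M A) := fun g hg => by
  rw [mem_sstab, ← aclg_smul, mem_sstab.1 (pstab_le_sstab A hg)]

lemma subset_aclg_of_pstab_le_sstab {A B : Set M} (hB : B.Finite)
    (h : pstab L M A ≤ sstab L M B) : B ⊆ aclg L M A := by
  intro b hb
  refine hB.subset ?_
  rintro _ ⟨g, rfl⟩
  rw [← mem_sstab.1 (h g.2)]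
  exact Set.smul_mem_smul_set hb

def IsPstabClosed (L : FirstOrder.Language) {M : Type*} [L.Structure M] (X : Set M) : Prop :=
  ∀ b : M, (∀ g ∈ pstab L M X, g • b = b) → b ∈ X

lemma isPstabClosed_of_aclg_eq {X : Set M} (hX : aclg L M X = X) : IsPstabClosed L X :=
  fun b hb => hX ▸ subset_aclg_of_pstab_le_sstab (Set.finite_singleton b)
    (fun g hg => by rw [mem_sstab, Set.smul_set_singleton, hb g hg]) rfl

lemma isPstabClosed_dclg0 : IsPstabClosed L (dclg0 L M) :=
  fun b hb g => hb g (by simp [pstab_dclg0])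

lemma IsPstabClosed.subset_iff {X Y : Set M} (hY : IsPstabClosed L Y) :
    X ⊆ Y ↔ pstab L M Y ≤ pstab L M X :=
  ⟨fun h => pstab_antitone_s15 h, fun h a ha => hY a fun _ hg => h hg a ha⟩

end GaloisClosure

namespace HypH

/-- By uniqueness in (H): a normalising `g` turns the sandwich `G_(K) ≤ H ≤ G_{K}` into one for
`g • K`. -/
lemma normalizer_le_sstab (hM : HypH L M) {H : Subgroup (M ≃[L] M)}
    (hH : IsOpen (H : Set (M ≃[L] M))) {K : Set M} (hKf : K.Finite) (hKc : aclg L M K = K)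
    (hKH : pstab L M K ≤ H) (hHK : H ≤ sstab L M K) :
    Subgroup.normalizer (H : Set (M ≃[L] M)) ≤ sstab L M K := by
  intro g hg
  obtain ⟨K₀, -, hK₀⟩ := hM.openSandwich H hH
  have hgK : (g • K).Finite ∧ aclg L M (g • K) = g • K ∧ pstab L M (g • K) ≤ H ∧
      H ≤ sstab L M (g • K) := by
    refine ⟨hKf.smul_set, by rw [aclg_smul, hKc], fun h hh => ?_, fun h hh => ?_⟩
    · exact (Subgroup.mem_normalizer_iff''.1 hg h).2 (hKH ((mem_pstab_smul g h K).1 hh))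
    · exact (mem_sstab_smul g h K).2 (hHK ((Subgroup.mem_normalizer_iff''.1 hg h).1 hh))
  exact (hK₀ _ hgK).trans (hK₀ K ⟨hKf, hKc, hKH, hHK⟩).symm

lemma aclg_aclg (hM : HypH L M) {A : Set M} (hA : A.Finite) :
    aclg L M (aclg L M A) = aclg L M A := by
  obtain ⟨K, ⟨hKf, hKc, hKA, hAK⟩, -⟩ :=
    hM.openSandwich (pstab L M (aclg L M A)) (isOpen_pstab (hM.locallyFinite A hA))
  have hK : K ⊆ aclg L M A := subset_aclg_of_pstab_le_sstab hKf <|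
    (pstab_le_sstab_aclg A).trans <| (sstab_le_normalizer_pstab _).trans <|
      hM.normalizer_le_sstab (isOpen_pstab (hM.locallyFinite A hA)) hKf hKc hKA hAK
  rw [← hK.antisymm ((isPstabClosed_of_aclg_eq hKc).subset_iff.2 hKA), hKc]

lemma mem_AA_iff (hM : HypH L M) {K : Set M} : K ∈ AA L M ↔ K.Finite ∧ aclg L M K = K := by
  constructor
  · rintro ⟨A, hA, rfl⟩
    exact ⟨hM.locallyFinite A hA, hM.aclg_aclg hA⟩
  · rintro ⟨hf, hc⟩
    exact ⟨K, hf, hc.symm⟩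

lemma isPstabClosed_of_mem_Aplus (hM : HypH L M) {X : Set M} (hX : X ∈ Aplus L M) :
    IsPstabClosed L X := by
  rcases hX with hX | rfl
  · exact isPstabClosed_of_aclg_eq (hM.mem_AA_iff.1 hX).2
  · exact isPstabClosed_dclg0

end HypH

lemma IsTopIso.symm {G H : Type*} [Group G] [Group H] [TopologicalSpace G] [TopologicalSpace H]
    {e : G ≃* H} (he : IsTopIso e) : IsTopIso e.symm :=
  ⟨he.2, he.1⟩

section Transfer

variable {e : (M ≃[L] M) ≃* (N ≃[L'] N)}

/-- Let `K'` be the closed set of the open subgroup `e(G_(K))` and `K_W` that of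
`W := e⁻¹(G_(K')) ≤ G_(K)`. As `G_(K)` normalises `W`, it stabilises `K_W` setwise, so
`K_W ⊆ acl(K) = K` and `G_(K) ≤ G_(K_W) ≤ W`. -/
lemma exists_map_pstab_eq (hM : HypH L M) (hN : HypH L' N) (he : IsTopIso e) {K : Set M}
    (hK : K ∈ AA L M) : ∃ K' ∈ AA L' N, (pstab L M K).map e.toMonoidHom = pstab L' N K' := by
  obtain ⟨hKf, hKc⟩ := hM.mem_AA_iff.1 hK
  have hH : IsOpen ((pstab L M K).map e.toMonoidHom : Set (N ≃[L'] N)) := by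
    rw [Subgroup.map_equiv_eq_comap_symm', Subgroup.coe_comap]
    exact (isOpen_pstab hKf).preimage he.2
  obtain ⟨K', ⟨hK'f, hK'c, hK'H, hHK'⟩, -⟩ := hN.openSandwich _ hH
  set W := (pstab L' N K').comap e.toMonoidHom
  have hW : IsOpen (W : Set (M ≃[L] M)) := (isOpen_pstab hK'f).preimage he.1
  obtain ⟨KW, ⟨hKWf, hKWc, hKWW, hWKW⟩, -⟩ := hM.openSandwich W hW
  have hWK : W ≤ pstab L M K := fun g hg => by
    simpa using hK'H (Subgroup.mem_comap.1 hg)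
  have hKW : pstab L M K ≤ Subgroup.normalizer (W : Set (M ≃[L] M)) := fun g hg =>
    Subgroup.le_normalizer_comap _ (sstab_le_normalizer_pstab K' (hHK' ⟨g, hg, rfl⟩))
  have hKWK : KW ⊆ K := hKc ▸ subset_aclg_of_pstab_le_sstab hKWf
    (hKW.trans (hM.normalizer_le_sstab hW hKWf hKWc hKWW hWKW))
  refine ⟨K', hN.mem_AA_iff.2 ⟨hK'f, hK'c⟩, ?_⟩
  rw [← le_antisymm hWK ((pstab_antitone_s15 hKWK).trans hKWW),
    Subgroup.map_comap_eq_self_of_surjective e.surjective]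

variable (e) in
/-- For `K ∈ A₊(M)` this is the closed set whose pointwise stabilizer is `e(G_(K))`
(`map_pstab_fixSet`). -/
def fixSet (K : Set M) : Set N := {b | ∀ g ∈ pstab L M K, e g • b = b}

lemma fixSet_eq_of_map_pstab_eq {X : Set M} {Y : Set N} (hY : IsPstabClosed L' Y)
    (h : (pstab L M X).map e.toMonoidHom = pstab L' N Y) : fixSet e X = Y := by
  ext b
  constructor
  · intro hb
    refine hY b fun g hg => ?_
    rw [← h] at hg
    obtain ⟨g, hg, rfl⟩ := hg
    exact hb g hg
  · intro hb g hg
    exact (h ▸ Subgroup.mem_map_of_mem e.toMonoidHom hg : e g ∈ pstab L' N Y) b hb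

lemma map_pstab_dclg0 :
    (pstab L M (dclg0 L M)).map e.toMonoidHom = pstab L' N (dclg0 L' N) := by
  rw [pstab_dclg0, pstab_dclg0, Subgroup.map_top_of_surjective _ e.surjective]

lemma fixSet_dclg0 : fixSet e (dclg0 L M) = dclg0 L' N :=
  fixSet_eq_of_map_pstab_eq isPstabClosed_dclg0 map_pstab_dclg0

lemma fixSet_mem_AA (hM : HypH L M) (hN : HypH L' N) (he : IsTopIso e) {K : Set M}
    (hK : K ∈ AA L M) :
    fixSet e K ∈ AA L' N ∧ (pstab L M K).map e.toMonoidHom = pstab L' N (fixSet e K) := by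
  obtain ⟨K', hK', h⟩ := exists_map_pstab_eq hM hN he hK
  rw [fixSet_eq_of_map_pstab_eq (hN.isPstabClosed_of_mem_Aplus (Or.inl hK')) h]
  exact ⟨hK', h⟩

lemma map_pstab_fixSet (hM : HypH L M) (hN : HypH L' N) (he : IsTopIso e) {X : Set M}
    (hX : X ∈ Aplus L M) : (pstab L M X).map e.toMonoidHom = pstab L' N (fixSet e X) := by
  rcases hX with hX | rfl
  · exact (fixSet_mem_AA hM hN he hX).2
  · rw [fixSet_dclg0]
    exact map_pstab_dclg0

lemma fixSet_mem_Aplus (hM : HypH L M) (hN : HypH L' N) (he : IsTopIso e) {X : Set M}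
    (hX : X ∈ Aplus L M) : fixSet e X ∈ Aplus L' N := by
  rcases hX with hX | rfl
  · exact Or.inl (fixSet_mem_AA hM hN he hX).1
  · rw [fixSet_dclg0]
    exact Or.inr rfl

lemma fixSet_symm_fixSet (hM : HypH L M) (hN : HypH L' N) (he : IsTopIso e) {X : Set M}
    (hX : X ∈ Aplus L M) : fixSet e.symm (fixSet e X) = X := by
  refine fixSet_eq_of_map_pstab_eq (hM.isPstabClosed_of_mem_Aplus hX) ?_
  rw [← map_pstab_fixSet hM hN he hX, Subgroup.map_equiv_eq_comap_symm']
  exact Subgroup.comap_map_eq_self_of_injective e.injective _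

lemma fixSet_inj (hM : HypH L M) (hN : HypH L' N) (he : IsTopIso e) {X Y : Set M}
    (hX : X ∈ Aplus L M) (hY : Y ∈ Aplus L M) : fixSet e X = fixSet e Y ↔ X = Y :=
  ⟨fun h => by rw [← fixSet_symm_fixSet hM hN he hX, h, fixSet_symm_fixSet hM hN he hY],
    congrArg _⟩

lemma fixSet_subset_fixSet_iff (hM : HypH L M) (hN : HypH L' N) (he : IsTopIso e) {X Y : Set M}
    (hX : X ∈ Aplus L M) (hY : Y ∈ Aplus L M) : fixSet e X ⊆ fixSet e Y ↔ X ⊆ Y := by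
  rw [(hN.isPstabClosed_of_mem_Aplus (fixSet_mem_Aplus hM hN he hY)).subset_iff,
    (hM.isPstabClosed_of_mem_Aplus hY).subset_iff, ← map_pstab_fixSet hM hN he hX,
    ← map_pstab_fixSet hM hN he hY, Subgroup.map_le_map_iff_of_injective e.injective]

lemma eqOn_fixSet_iff (hM : HypH L M) (hN : HypH L' N) (he : IsTopIso e) {X : Set M}
    (hX : X ∈ Aplus L M) {u v : M ≃[L] M} :
    Set.EqOn (e u) (e v) (fixSet e X) ↔ Set.EqOn u v X := by
  rw [eqOn_iff_inv_mul_mem_pstab, eqOn_iff_inv_mul_mem_pstab, ← map_pstab_fixSet hM hN he hX,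
    Subgroup.mem_map_equiv, map_mul, map_inv, e.symm_apply_apply, e.symm_apply_apply]

lemma fixSet_smul (g : M ≃[L] M) (K : Set M) : fixSet e (g • K) = e g • fixSet e K := by
  ext b
  rw [Set.mem_smul_set_iff_inv_smul_mem]
  constructor
  · intro hb h hh
    have := hb (g * h * g⁻¹) ((mem_pstab_smul g _ K).2 (by simpa [mul_assoc] using hh))
    rwa [map_mul, map_mul, map_inv, mul_smul, mul_smul, ← eq_inv_smul_iff] at this
  · intro hb h hh
    have := hb _ ((mem_pstab_smul g h K).1 hh)
    rwa [map_mul, map_mul, map_inv, mul_smul, mul_smul, inv_smul_eq_iff,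
      smul_inv_smul] at this

lemma closedUnder_fixSet (K : Set M) {n : ℕ} (f : L'.Functions n) : ClosedUnder f (fixSet e K) :=
  fun x hx g hg => by
    rw [aut_smul_def, (e g).map_fun]
    exact congrArg _ (funext fun i => hx i g hg)

end Transfer

section Hasse

lemma hasseCovers_iff_covBy {α : Type*} {S : Set (Set α)} {A B : Set α} :
    hasseCovers S A B ↔ ∃ (hA : A ∈ S) (hB : B ∈ S), (⟨A, hA⟩ : S) ⋖ ⟨B, hB⟩ := by
  constructor
  · rintro ⟨hA, hB, hAB, hC⟩
    exact ⟨hA, hB, hAB, fun C hAC hCB => hC ⟨C, C.2, hAC, hCB⟩⟩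
  · rintro ⟨hA, hB, hAB, hC⟩
    exact ⟨hA, hB, hAB, fun ⟨C, hCS, hAC, hCB⟩ => hC (c := ⟨C, hCS⟩) hAC hCB⟩

lemma hasseAdj_of_orderIso {α β : Type*} {S : Set (Set α)} {T : Set (Set β)} (φ : S ≃o T)
    {f : Set α → Set β} (hf : ∀ A (hA : A ∈ S), (φ ⟨A, hA⟩ : Set β) = f A) {A B : Set α}
    (h : hasseAdj S A B) : hasseAdj T (f A) (f B) := by
  have key : ∀ {A B}, hasseCovers S A B → hasseCovers T (f A) (f B) := by
    intro A B hAB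
    obtain ⟨hA, hB, hcov⟩ := hasseCovers_iff_covBy.1 hAB
    rw [← hf A hA, ← hf B hB]
    exact hasseCovers_iff_covBy.2 ⟨_, _, (apply_covBy_apply_iff φ).2 hcov⟩
  exact h.imp key key

variable {e : (M ≃[L] M) ≃* (N ≃[L'] N)}

noncomputable def aplusOrderIso (hM : HypH L M) (hN : HypH L' N) (he : IsTopIso e) :
    Aplus L M ≃o Aplus L' N where
  toFun X := ⟨fixSet e X, fixSet_mem_Aplus hM hN he X.2⟩
  invFun Y := ⟨fixSet e.symm Y, fixSet_mem_Aplus hN hM he.symm Y.2⟩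
  left_inv X := Subtype.ext (fixSet_symm_fixSet hM hN he X.2)
  right_inv Y := Subtype.ext (fixSet_symm_fixSet hN hM he.symm Y.2)
  map_rel_iff' {X Y} := fixSet_subset_fixSet_iff hM hN he X.2 Y.2

lemma AkE_subset_AA {k : ℕ∞} : AkE L M k ⊆ AA L M := by
  induction k using WithTop.recTopCoe with
  | top => exact fun _ h => h
  | coe k => exact fun _ h => h.1

lemma fixSet_mem_AkE (hM : HypH L M) (hN : HypH L' N) (he : IsTopIso e) {k : ℕ∞} {K : Set M}
    (hK : K ∈ AkE L M k) : fixSet e K ∈ AkE L' N k := by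
  induction k using WithTop.recTopCoe with
  | top => exact (fixSet_mem_AA hM hN he hK).1
  | coe k =>
    obtain ⟨hKA, hne, j, c, hj, hc0, hcj, hadj⟩ := hK
    refine ⟨(fixSet_mem_AA hM hN he hKA).1, fun h => hne ?_, j, fun i => fixSet e (c i), hj,
      (congrArg (fixSet e) hc0).trans fixSet_dclg0, congrArg (fixSet e) hcj,
      fun i => hasseAdj_of_orderIso (aplusOrderIso hM hN he) (fun _ _ => rfl) (hadj i)⟩
    rw [← fixSet_dclg0 (e := e)] at h
    exact (fixSet_inj hM hN he (Or.inl hKA) (Or.inr rfl)).1 h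

end Hasse

section Triples

variable {k : ℕ∞}

def Realizes (g : M ≃[L] M) (t : ExTriple L M k) : Prop := ∀ a : t.K, g a = t.p a

lemma ExTriple.ext_of_realizes {t₁ t₂ : ExTriple L M k} (hK : t₁.K = t₂.K) (hK' : t₁.K' = t₂.K')
    {g : M ≃[L] M} (h₁ : Realizes g t₁) (h₂ : Realizes g t₂) : t₁ = t₂ := by
  obtain ⟨K₁, K₁', _, _, p₁, _⟩ := t₁
  obtain ⟨K₂, K₂', _, _, p₂, _⟩ := t₂
  subst hK hK'
  obtain rfl : p₁ = p₂ := Equiv.ext fun a => Subtype.ext ((h₁ a).symm.trans (h₂ a))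
  rfl

lemma Realizes.realizes_iff_eqOn {g₀ : M ≃[L] M} {t : ExTriple L M k} (h₀ : Realizes g₀ t)
    {g : M ≃[L] M} : Realizes g t ↔ Set.EqOn g g₀ t.K :=
  ⟨fun h a ha => (h ⟨a, ha⟩).trans (h₀ ⟨a, ha⟩).symm, fun h a => (h a.2).trans (h₀ a)⟩

lemma Realizes.smul_K {g : M ≃[L] M} {t : ExTriple L M k} (h : Realizes g t) : g • t.K = t.K' := by
  ext b
  constructor
  · rintro ⟨a, ha, rfl⟩
    have := (t.p ⟨a, ha⟩).2
    rwa [← h ⟨a, ha⟩] at this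
  · intro hb
    exact ⟨t.p.symm ⟨b, hb⟩, (t.p.symm ⟨b, hb⟩).2, (h _).trans (by simp)⟩

lemma ExTriple.K_mem_Aplus (t : ExTriple L M k) : t.K ∈ Aplus L M :=
  Or.inl (AkE_subset_AA t.hK)

lemma ExTriple.K'_mem_Aplus (t : ExTriple L M k) : t.K' ∈ Aplus L M :=
  Or.inl (AkE_subset_AA t.hK')

lemma isIdTriple_iff_realizes_one {t : ExTriple L M k} :
    IsIdTriple L M t ↔ t.K = t.K' ∧ Realizes 1 t :=
  and_congr_right fun _ => forall_congr' fun a => by rw [aut_one_apply, eq_comm]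

lemma exists_realizes (hM : HypH L M) (t : ExTriple L M k) : ∃ g, Realizes g t := by
  obtain ⟨hf, hc⟩ := hM.mem_AA_iff.1 (AkE_subset_AA t.hK)
  obtain ⟨hf', hc'⟩ := hM.mem_AA_iff.1 (AkE_subset_AA t.hK')
  exact hM.extendsIso _ _ hf hf' hc hc' t.p t.iso

lemma isPartialIso_subtypeEquiv (g : M ≃[L] M) {A B : Set M}
    (hA : ∀ {n : ℕ} (f : L.Functions n), ClosedUnder f A) (h : ∀ a, a ∈ A ↔ g a ∈ B) :
    IsPartialIso L M A B (g.toEquiv.subtypeEquiv h) :=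
  ⟨fun f x => ⟨hA f _ fun i => (x i).2, g.map_fun f _⟩, fun r _ => (g.map_rel r _).symm⟩

variable {e : (M ≃[L] M) ≃* (N ≃[L'] N)}

lemma mem_fixSet_iff_of_realizes {g : M ≃[L] M} {t : ExTriple L M k} (h : Realizes g t) (b : N) :
    b ∈ fixSet e t.K ↔ e g b ∈ fixSet e t.K' := by
  rw [← h.smul_K, fixSet_smul, ← aut_smul_def, Set.smul_mem_smul_set_iff]

noncomputable def exMap (hM : HypH L M) (hN : HypH L' N) (he : IsTopIso e)
    (t : ExTriple L M k) : ExTriple L' N k where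
  K := fixSet e t.K
  K' := fixSet e t.K'
  hK := fixSet_mem_AkE hM hN he t.hK
  hK' := fixSet_mem_AkE hM hN he t.hK'
  p := (e (exists_realizes hM t).choose).toEquiv.subtypeEquiv
    (mem_fixSet_iff_of_realizes (exists_realizes hM t).choose_spec)
  iso := isPartialIso_subtypeEquiv _ (closedUnder_fixSet t.K) _

lemma realizes_exMap (hM : HypH L M) (hN : HypH L' N) (he : IsTopIso e) (t : ExTriple L M k) :
    Realizes (e (exists_realizes hM t).choose) (exMap hM hN he t) :=
  fun _ => rfl

lemma map_realizes_exMap_iff (hM : HypH L M) (hN : HypH L' N) (he : IsTopIso e)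
    (t : ExTriple L M k) {g : M ≃[L] M} : Realizes (e g) (exMap hM hN he t) ↔ Realizes g t := by
  rw [(realizes_exMap hM hN he t).realizes_iff_eqOn,
    (exists_realizes hM t).choose_spec.realizes_iff_eqOn]
  exact eqOn_fixSet_iff hM hN he t.K_mem_Aplus

lemma exMap_symm_exMap (hM : HypH L M) (hN : HypH L' N) (he : IsTopIso e)
    (t : ExTriple L M k) : exMap hN hM he.symm (exMap hM hN he t) = t := by
  set s := exMap hM hN he t
  have hs : Realizes (e.symm (exists_realizes hN s).choose) t := by
    rw [← map_realizes_exMap_iff hM hN he, e.apply_symm_apply]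
    exact (exists_realizes hN s).choose_spec
  exact ExTriple.ext_of_realizes (fixSet_symm_fixSet hM hN he t.K_mem_Aplus)
    (fixSet_symm_fixSet hM hN he t.K'_mem_Aplus) (realizes_exMap hN hM he.symm s) hs

lemma isIdTriple_exMap_iff (hM : HypH L M) (hN : HypH L' N) (he : IsTopIso e)
    (t : ExTriple L M k) : IsIdTriple L' N (exMap hM hN he t) ↔ IsIdTriple L M t := by
  rw [isIdTriple_iff_realizes_one, isIdTriple_iff_realizes_one, ← map_one e,
    map_realizes_exMap_iff]
  exact and_congr_left' (fixSet_inj hM hN he t.K_mem_Aplus t.K'_mem_Aplus)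

lemma eRel_exMap_iff (hM : HypH L M) (hN : HypH L' N) (he : IsTopIso e) {n : ℕ}
    (x : Fin n → ExTriple L M k) : ERel L' N (exMap hM hN he ∘ x) ↔ ERel L M x := by
  constructor
  · rintro ⟨h, hh⟩
    refine ⟨e.symm h, fun i => (map_realizes_exMap_iff hM hN he (x i)).1 ?_⟩
    rw [e.apply_symm_apply]
    exact hh i
  · rintro ⟨g, hg⟩
    exact ⟨e g, fun i => (map_realizes_exMap_iff hM hN he (x i)).2 (hg i)⟩

lemma domRel_exMap_iff (hM : HypH L M) (hN : HypH L' N) (he : IsTopIso e)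
    (t s : ExTriple L M k) :
    DomRel L' N (exMap hM hN he t) (exMap hM hN he s) ↔ DomRel L M t s :=
  and_congr (isIdTriple_exMap_iff hM hN he s)
    (fixSet_inj hM hN he s.K_mem_Aplus t.K_mem_Aplus)

lemma codRel_exMap_iff (hM : HypH L M) (hN : HypH L' N) (he : IsTopIso e)
    (t s : ExTriple L M k) :
    CodRel L' N (exMap hM hN he t) (exMap hM hN he s) ↔ CodRel L M t s :=
  and_congr (isIdTriple_exMap_iff hM hN he s)
    (fixSet_inj hM hN he s.K_mem_Aplus t.K'_mem_Aplus)

noncomputable def exEquiv (hM : HypH L M) (hN : HypH L' N) (he : IsTopIso e) (k : ℕ∞) :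
    ExTriple L M k ≃ ExTriple L' N k where
  toFun := exMap hM hN he
  invFun := exMap hN hM he.symm
  left_inv := exMap_symm_exMap hM hN he
  right_inv := exMap_symm_exMap hN hM he.symm

end Triples

end

/-- For `M`, `N` satisfying Hypothesis (H), a topological isomorphism
between `Aut(M)` and `Aut(N)` yields isomorphisms `E^ex_M(k) ≅ E^ex_N(k)` for all
`0 < k ≤ ω`. -/
theorem stmt_15 (L L' : FirstOrder.Language) (M N : Type*) [L.Structure M] [L'.Structure N]
    (hM : HypH L M) (hN : HypH L' N)
    (e : (M ≃[L] M) ≃* (N ≃[L'] N)) (he : IsTopIso e) :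
    ∀ k : ℕ∞, 0 < k → ∃ F : ExTriple L M k ≃ ExTriple L' N k, IsExIso F :=
  fun k _ => ⟨exEquiv hM hN he k, fun t => (isIdTriple_exMap_iff hM hN he t).symm,
    fun _ x => (eRel_exMap_iff hM hN he x).symm, fun t s => (domRel_exMap_iff hM hN he t s).symm,
    fun t s => (codRel_exMap_iff hM hN he t s).symm⟩

end Paper
end
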